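/- Let G be a finite simple graph with vertex set V and edge set E, let J : E → ℝ, and let u ≠ v be two vertices. Then Σ_{σ : V → {−1,+1}} σ_u σ_v · Π_{e = {p,q} ∈ E} exp(J_e σ_p σ_q) = 2^{|V|} · (Π_{e∈E} cosh J_e) · Σ_{C ⊆ E : the set of vertices with odd degree in C is exactly {u, v}} Π_{e∈C} tanh J_e. -/
import Mathlib


open Finset

/-- The spin value (±1) associated to a Boolean configuration. -/
noncomputable def spin {V : Type*} (s : V → Bool) : V → ℝ :=
  fun p => if s p then 1 else -1

/-- The product `σ_u σ_v` over the two endpoints of an unordered pair. -/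
noncomputable def edgeSpin {V : Type*} (s : V → Bool) : Sym2 V → ℝ :=
  Sym2.lift ⟨fun u v => spin s u * spin s v, fun _ _ => mul_comm _ _⟩

lemma spin_pm {V : Type*} (s : V → Bool) (w : V) : spin s w = 1 ∨ spin s w = -1 := by
  unfold spin; by_cases h : s w <;> simp [h]

lemma edgeSpin_pm {V : Type*} (s : V → Bool) (e : Sym2 V) :
    edgeSpin s e = 1 ∨ edgeSpin s e = -1 := by
  induction e using Sym2.ind with
  | _ a b =>
    rcases spin_pm s a with h | h <;> rcases spin_pm s b with h' | h' <;>
      simp [edgeSpin, h, h']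

lemma exp_mul_pm (J x : ℝ) (hx : x = 1 ∨ x = -1) :
    Real.exp (J * x) = Real.cosh J * (1 + Real.tanh J * x) := by
  have hc : Real.cosh J ≠ 0 := (Real.cosh_pos J).ne'
  have ht : Real.tanh J * Real.cosh J = Real.sinh J := by
    rw [Real.tanh_eq_sinh_div_cosh, div_mul_cancel₀ _ hc]
  rcases hx with rfl | rfl
  · rw [mul_one]
    linear_combination -Real.cosh_add_sinh J - ht
  · rw [mul_neg_one]
    linear_combination -Real.cosh_sub_sinh J + ht

lemma edgeSpin_prod {V : Type*} [Fintype V] [DecidableEq V] (s : V → Bool)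
    (e : Sym2 V) (he : ¬ e.IsDiag) :
    edgeSpin s e = ∏ w : V, (if w ∈ e then spin s w else 1) := by
  induction e using Sym2.ind with
  | _ a b =>
    have hab : a ≠ b := by simpa [Sym2.mk_isDiag_iff] using he
    rw [← Finset.prod_filter]
    have hf : Finset.univ.filter (fun w => w ∈ s(a, b)) = {a, b} := by
      ext w; simp [Sym2.mem_iff]
    rw [hf, Finset.prod_pair hab]
    simp [edgeSpin]

lemma spin_sum_key {V : Type*} [Fintype V] [DecidableEq V] (u v : V) (huv : u ≠ v)
    (C : Finset (Sym2 V)) (hC : ∀ e ∈ C, ¬ e.IsDiag) :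
    ∑ s : V → Bool, spin s u * spin s v * ∏ e ∈ C, edgeSpin s e
      = if (∀ w : V, (¬Even ((C.filter (fun e => w ∈ e)).card) ↔ w = u ∨ w = v))
        then (2 : ℝ) ^ Fintype.card V else 0 := by
  classical
  set d : V → ℕ := fun w =>
    (C.filter (fun e => w ∈ e)).card + (if w = u then 1 else 0) + (if w = v then 1 else 0)
    with hd
  -- Step C1: the summand is a product over vertices
  have hprodC : ∀ s : V → Bool, ∏ e ∈ C, edgeSpin s e
      = ∏ w : V, spin s w ^ (C.filter (fun e => w ∈ e)).card := by
    intro s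
    calc ∏ e ∈ C, edgeSpin s e
        = ∏ e ∈ C, ∏ w : V, (if w ∈ e then spin s w else 1) :=
          Finset.prod_congr rfl fun e he => edgeSpin_prod s e (hC e he)
      _ = ∏ w : V, ∏ e ∈ C, (if w ∈ e then spin s w else 1) := Finset.prod_comm
      _ = ∏ w : V, spin s w ^ (C.filter (fun e => w ∈ e)).card := by
          refine Finset.prod_congr rfl fun w _ => ?_
          rw [Finset.prod_ite, Finset.prod_const, Finset.prod_const_one, mul_one]
  have hC1 : ∀ s : V → Bool, spin s u * spin s v * ∏ e ∈ C, edgeSpin s e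
      = ∏ w : V, spin s w ^ d w := by
    intro s
    have h1 : ∀ w : V, spin s w ^ d w
        = spin s w ^ (C.filter (fun e => w ∈ e)).card *
            (if w = u then spin s w else 1) * (if w = v then spin s w else 1) := by
      intro w
      by_cases hu : w = u <;> by_cases hv : w = v <;>
        simp [hd, hu, hv, pow_add, pow_succ]
    rw [Finset.prod_congr rfl fun w _ => h1 w, Finset.prod_mul_distrib,
      Finset.prod_mul_distrib, Finset.prod_ite_eq' Finset.univ u (fun w => spin s w),
      Finset.prod_ite_eq' Finset.univ v (fun w => spin s w)]
    simp only [Finset.mem_univ, if_pos]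
    rw [← hprodC]
    ring
  simp only [hC1]
  -- Step C2: exchange sum and product
  have hswap : ∑ s : V → Bool, ∏ w : V, spin s w ^ d w
      = ∏ w : V, ∑ b : Bool, (if b then (1:ℝ) else -1) ^ d w := by
    rw [Fintype.prod_sum (fun w (b : Bool) => (if b then (1:ℝ) else -1) ^ d w)]
    rfl
  rw [hswap]
  -- Step C3: evaluate the Boolean sums
  have hbool : ∀ n : ℕ, (∑ b : Bool, (if b then (1:ℝ) else -1) ^ n)
      = if Even n then 2 else 0 := by
    intro n
    rcases Nat.even_or_odd n with h | h
    · simp [Fintype.sum_bool, h.neg_one_pow, h]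
    · simp [Fintype.sum_bool, h.neg_one_pow, Nat.not_even_iff_odd.mpr h]
  simp only [hbool]
  -- Step C4: parity bookkeeping
  have heq : ∀ w : V, Even (d w) ↔
      (¬Even ((C.filter (fun e => w ∈ e)).card) ↔ w = u ∨ w = v) := by
    intro w
    by_cases hu : w = u <;> by_cases hv : w = v
    · exact absurd (hu ▸ hv.symm ▸ rfl : u = v) huv
    · simp [hd, hu, hv, Nat.even_add_one, huv, Ne.symm huv]
    · simp [hd, hu, hv, Nat.even_add_one, huv, Ne.symm huv]
    · simp [hd, hu, hv]
  by_cases hP : ∀ w : V, (¬Even ((C.filter (fun e => w ∈ e)).card) ↔ w = u ∨ w = v)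
  · rw [if_pos hP]
    have : ∀ w : V, Even (d w) := fun w => (heq w).mpr (hP w)
    calc ∏ w : V, (if Even (d w) then (2:ℝ) else 0) = ∏ _w : V, (2:ℝ) :=
          Finset.prod_congr rfl fun w _ => if_pos (this w)
      _ = (2:ℝ) ^ Fintype.card V := by
          rw [Finset.prod_const, Finset.card_univ]
  · rw [if_neg hP]
    obtain ⟨w, hw⟩ := not_forall.mp hP
    refine Finset.prod_eq_zero (Finset.mem_univ w) ?_
    rw [if_neg]
    exact fun h => hw ((heq w).mp h)

/-- High-temperature expansion of the unnormalized two-point function: the sum over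
configurations of `σ_u σ_v` times the Boltzmann weight equals
`2^{|V|} · Π_{e∈E} cosh J_e` times the sum over edge-subsets whose odd-degree
vertex set is exactly `{u, v}` of `Π_{e∈C} tanh J_e`. -/
theorem high_temperature_expansion_two_point {V : Type*} [Fintype V] [DecidableEq V]
    (G : SimpleGraph V) [DecidableRel G.Adj] (J : Sym2 V → ℝ)
    (u v : V) (huv : u ≠ v) :
    ∑ s : V → Bool,
        spin s u * spin s v * ∏ e ∈ G.edgeFinset, Real.exp (J e * edgeSpin s e)
      = 2 ^ Fintype.card V * (∏ e ∈ G.edgeFinset, Real.cosh (J e)) *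
        ∑ C ∈ G.edgeFinset.powerset.filter
            (fun C => ∀ w : V,
              (¬Even ((C.filter (fun e => w ∈ e)).card) ↔ w = u ∨ w = v)),
          ∏ e ∈ C, Real.tanh (J e) := by
  classical
  -- Expand each Boltzmann factor
  have hstep : ∀ s : V → Bool, ∏ e ∈ G.edgeFinset, Real.exp (J e * edgeSpin s e)
      = (∏ e ∈ G.edgeFinset, Real.cosh (J e)) *
        ∑ C ∈ G.edgeFinset.powerset,
          (∏ e ∈ C, Real.tanh (J e)) * ∏ e ∈ C, edgeSpin s e := by
    intro s
    have h1 : ∀ e ∈ G.edgeFinset, Real.exp (J e * edgeSpin s e)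
        = Real.cosh (J e) * (1 + Real.tanh (J e) * edgeSpin s e) :=
      fun e _ => exp_mul_pm _ _ (edgeSpin_pm s e)
    rw [Finset.prod_congr rfl h1, Finset.prod_mul_distrib]
    congr 1
    have h2 : ∀ e ∈ G.edgeFinset, (1 : ℝ) + Real.tanh (J e) * edgeSpin s e
        = Real.tanh (J e) * edgeSpin s e + 1 := fun e _ => add_comm _ _
    rw [Finset.prod_congr rfl h2,
      Finset.prod_add (fun e => Real.tanh (J e) * edgeSpin s e) (fun _ => (1:ℝ))]
    refine Finset.sum_congr rfl fun C _ => ?_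
    rw [Finset.prod_const_one, mul_one, Finset.prod_mul_distrib]
  simp only [hstep]
  -- Exchange the order of summation
  have hre : ∀ s : V → Bool,
      spin s u * spin s v * ((∏ e ∈ G.edgeFinset, Real.cosh (J e)) *
        ∑ C ∈ G.edgeFinset.powerset,
          (∏ e ∈ C, Real.tanh (J e)) * ∏ e ∈ C, edgeSpin s e)
      = ∑ C ∈ G.edgeFinset.powerset,
          (∏ e ∈ G.edgeFinset, Real.cosh (J e)) * (∏ e ∈ C, Real.tanh (J e)) *
            (spin s u * spin s v * ∏ e ∈ C, edgeSpin s e) := by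
    intro s
    rw [Finset.mul_sum, Finset.mul_sum]
    exact Finset.sum_congr rfl fun C _ => by ring
  simp only [hre]
  rw [Finset.sum_comm]
  have hkey : ∀ C ∈ G.edgeFinset.powerset,
      ∑ s : V → Bool, (∏ e ∈ G.edgeFinset, Real.cosh (J e)) * (∏ e ∈ C, Real.tanh (J e)) *
          (spin s u * spin s v * ∏ e ∈ C, edgeSpin s e)
      = (∏ e ∈ G.edgeFinset, Real.cosh (J e)) * (∏ e ∈ C, Real.tanh (J e)) *
          (if (∀ w : V, (¬Even ((C.filter (fun e => w ∈ e)).card) ↔ w = u ∨ w = v))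
            then (2 : ℝ) ^ Fintype.card V else 0) := by
    intro C hCmem
    rw [← Finset.mul_sum, spin_sum_key u v huv C]
    intro e he
    have heE : e ∈ G.edgeFinset := Finset.mem_powerset.mp hCmem he
    exact G.not_isDiag_of_mem_edgeSet (SimpleGraph.mem_edgeFinset.mp heE)
  rw [Finset.sum_congr rfl hkey, Finset.sum_filter, Finset.mul_sum]
  refine Finset.sum_congr rfl fun C _ => ?_
  by_cases hP : ∀ w : V, (¬Even ((C.filter (fun e => w ∈ e)).card) ↔ w = u ∨ w = v)
  · rw [if_pos hP, if_pos hP]; ring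
  · rw [if_neg hP, if_neg hP, mul_zero, mul_zero]
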